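/- arXiv:1511.03693 — 5 statements merged into one kernel-verified Lean document; each statement's English description precedes it below -/
import Mathlib

section
/- Let f :⊆ A ⇉ B and g :⊆ C ⇉ D be partial multivalued functions between represented spaces. Then f ≤_sW^c g if and only if there exist continuous partial multivalued functions k :⊆ A ⇉ C and h :⊆ D ⇉ B such that h ∘ g ∘ k ⪯ f. -/
open Filter Topology

/-! ### Partial functions on Baire space -/

/-- A partial function on Baire space, given by a domain and an underlying total
function (whose values outside the domain are irrelevant). -/
structure PFunB where
  dom : Set (ℕ → ℕ)
  toFun : (ℕ → ℕ) → (ℕ → ℕ)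

/-- A partial function on Baire space is continuous if its underlying function is
continuous on its domain. -/
def PFunB.IsContinuous (F : PFunB) : Prop := ContinuousOn F.toFun F.dom

/-- Composition of partial functions on Baire space. -/
def PFunB.comp (F G : PFunB) : PFunB where
  dom := {p | p ∈ G.dom ∧ G.toFun p ∈ F.dom}
  toFun := fun p => F.toFun (G.toFun p)

/-- A partial function from (Baire space) × (Baire space) to Baire space. -/
structure PFunB2 where
  dom : Set ((ℕ → ℕ) × (ℕ → ℕ))
  toFun : (ℕ → ℕ) × (ℕ → ℕ) → (ℕ → ℕ)

def PFunB2.IsContinuous (K : PFunB2) : Prop := ContinuousOn K.toFun K.dom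

/-! ### Coding of sequences -/

/-- The `n`-th column of `p : ℕ → ℕ`, via the standard pairing bijection. -/
def col (p : ℕ → ℕ) (n : ℕ) : ℕ → ℕ := fun k => p (Nat.pair n k)

/-- Interleaving pairing of two elements of Baire space. -/
def pairB (p q : ℕ → ℕ) : ℕ → ℕ := fun n => if n % 2 = 0 then p (n / 2) else q (n / 2)

def leftB (r : ℕ → ℕ) : ℕ → ℕ := fun n => r (2 * n)

def rightB (r : ℕ → ℕ) : ℕ → ℕ := fun n => r (2 * n + 1)

theorem leftB_pairB (p q : ℕ → ℕ) : leftB (pairB p q) = p := by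
  funext n
  show (if (2 * n) % 2 = 0 then p ((2 * n) / 2) else q ((2 * n) / 2)) = p n
  rw [if_pos (by omega)]
  congr 1
  omega

theorem rightB_pairB (p q : ℕ → ℕ) : rightB (pairB p q) = q := by
  funext n
  show (if (2 * n + 1) % 2 = 0 then p ((2 * n + 1) / 2) else q ((2 * n + 1) / 2)) = q n
  rw [if_neg (by omega)]
  congr 1
  omega

/-! ### Represented spaces -/

/-- A represented space: a set `X` together with a partial surjection from Baire space
onto `X` (modelled as a total map together with a domain, such that every point has a
name in the domain). -/
structure RepSpace (X : Type u) where
  dom : Set (ℕ → ℕ)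
  map : (ℕ → ℕ) → X
  surj : ∀ x : X, ∃ p ∈ dom, map p = x

/-- Baire space with the identity representation. -/
def idRep : RepSpace (ℕ → ℕ) := ⟨Set.univ, id, fun x => ⟨x, trivial, rfl⟩⟩

/-- The representation of `X`, viewed as a partial multivalued function from Baire
space to `X` (with empty value outside the domain). -/
def RepSpace.toMV {X : Type u} (δ : RepSpace X) : (ℕ → ℕ) → Set X :=
  fun p => {x | p ∈ δ.dom ∧ δ.map p = x}

/-- Product of represented spaces, via the interleaving pairing homeomorphism. -/
def RepSpace.prod {X : Type u} {Y : Type v} (δX : RepSpace X) (δY : RepSpace Y) :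
    RepSpace (X × Y) where
  dom := {r | leftB r ∈ δX.dom ∧ rightB r ∈ δY.dom}
  map := fun r => (δX.map (leftB r), δY.map (rightB r))
  surj := by
    rintro ⟨x, y⟩
    obtain ⟨p, hp, hpx⟩ := δX.surj x
    obtain ⟨q, hq, hqy⟩ := δY.surj y
    refine ⟨pairB p q, ⟨?_, ?_⟩, ?_⟩
    · rw [leftB_pairB]; exact hp
    · rw [rightB_pairB]; exact hq
    · show (δX.map (leftB (pairB p q)), δY.map (rightB (pairB p q))) = (x, y)
      rw [leftB_pairB, rightB_pairB, hpx, hqy]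

/-- The represented space of sequences in `X`: `δ(p) = (δ_X((p)_n))_n`. -/
def RepSpace.seq {X : Type u} (δ : RepSpace X) : RepSpace (ℕ → X) where
  dom := {p | ∀ n, col p n ∈ δ.dom}
  map := fun p n => δ.map (col p n)
  surj := by
    intro x
    choose q hq hmap using fun n => δ.surj (x n)
    have hcol : ∀ n, col (fun m => q (Nat.unpair m).1 (Nat.unpair m).2) n = q n := by
      intro n; funext k; simp [col]
    refine ⟨fun m => q (Nat.unpair m).1 (Nat.unpair m).2, fun n => ?_, ?_⟩
    · rw [hcol]; exact hq n
    · funext n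
      show δ.map (col (fun m => q (Nat.unpair m).1 (Nat.unpair m).2) n) = x n
      rw [hcol]; exact hmap n

/-! ### Partial multivalued functions -/

/-- Composition of partial multivalued functions (with the domain convention
`dom (f ∘ g) = {x ∈ dom g : g x ⊆ dom f}`; a partial multivalued function is modelled
as a `Set`-valued function whose domain is the set of points with nonempty value). -/
def MComp {X : Type u} {Y : Type v} {Z : Type w} (f : Y → Set Z) (g : X → Set Y) :
    X → Set Z :=
  fun x => {z | (∀ y ∈ g x, (f y).Nonempty) ∧ ∃ y ∈ g x, z ∈ f y}

/-- `f` tightens `g`: `dom g ⊆ dom f` and `f x ⊆ g x` for every `x ∈ dom g`. -/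
def Tightens {X : Type u} {Y : Type v} (f g : X → Set Y) : Prop :=
  ∀ x, (g x).Nonempty → (f x).Nonempty ∧ f x ⊆ g x

/-- `F` is a realizer of the partial multivalued function `f`. -/
def Realizes {X : Type u} {Y : Type v} (δX : RepSpace X) (δY : RepSpace Y)
    (F : PFunB) (f : X → Set Y) : Prop :=
  ∀ p ∈ δX.dom, (f (δX.map p)).Nonempty →
    p ∈ F.dom ∧ F.toFun p ∈ δY.dom ∧ δY.map (F.toFun p) ∈ f (δX.map p)

/-- A partial multivalued function between represented spaces is continuous if it has a
continuous realizer. -/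
def MCts {X : Type u} {Y : Type v} (δX : RepSpace X) (δY : RepSpace Y)
    (f : X → Set Y) : Prop :=
  ∃ F : PFunB, F.IsContinuous ∧ Realizes δX δY F f

/-- Strong continuous Weihrauch reducibility `f ≤_sW^c g`. -/
def StrongWc {A : Type u} {B : Type v} {C : Type w} {D : Type x}
    (δA : RepSpace A) (δB : RepSpace B) (δC : RepSpace C) (δD : RepSpace D)
    (f : A → Set B) (g : C → Set D) : Prop :=
  ∃ K H : PFunB, K.IsContinuous ∧ H.IsContinuous ∧
    ∀ G : PFunB, Realizes δC δD G g → Realizes δA δB (K.comp (G.comp H)) f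

/-- Continuous Weihrauch reducibility `f ≤_W^c g`. -/
def Wc {A : Type u} {B : Type v} {C : Type w} {D : Type x}
    (δA : RepSpace A) (δB : RepSpace B) (δC : RepSpace C) (δD : RepSpace D)
    (f : A → Set B) (g : C → Set D) : Prop :=
  ∃ (K : PFunB2) (H : PFunB), K.IsContinuous ∧ H.IsContinuous ∧
    ∀ G : PFunB, Realizes δC δD G g →
      Realizes δA δB
        ⟨{p | p ∈ H.dom ∧ H.toFun p ∈ G.dom ∧ (p, G.toFun (H.toFun p)) ∈ K.dom},
          fun p => K.toFun (p, G.toFun (H.toFun p))⟩ f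

/-- Continuous Weihrauch equivalence `f ≡_W^c g`. -/
def WcEquiv {A : Type u} {B : Type v} {C : Type w} {D : Type x}
    (δA : RepSpace A) (δB : RepSpace B) (δC : RepSpace C) (δD : RepSpace D)
    (f : A → Set B) (g : C → Set D) : Prop :=
  Wc δA δB δC δD f g ∧ Wc δC δD δA δB g f

/-- `id_{ℕ^ℕ} × g` for a partial multivalued `g`. -/
def idProd {C : Type u} {D : Type v} (g : C → Set D) :
    (ℕ → ℕ) × C → Set ((ℕ → ℕ) × D) :=
  fun pc => {qd | qd.1 = pc.1 ∧ qd.2 ∈ g pc.2}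

/-- `f` is a cylinder if `id_{ℕ^ℕ} × f ≤_sW^c f`. -/
def IsCylinder {X : Type u} {Y : Type v} (δX : RepSpace X) (δY : RepSpace Y)
    (f : X → Set Y) : Prop :=
  StrongWc (idRep.prod δX) (idRep.prod δY) δX δY (idProd f) f

/-- `T :⊆ X ⇉ Y` is transparent: for every continuous `g :⊆ Y ⇉ Y` there is a
continuous `f :⊆ X ⇉ X` with `T ∘ f ⪯ g ∘ T`. -/
def Transparent {X : Type u} {Y : Type v} (δX : RepSpace X) (δY : RepSpace Y)
    (T : X → Set Y) : Prop :=
  ∀ g : Y → Set Y, MCts δY δY g →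
    ∃ f : X → Set X, MCts δX δX f ∧ Tightens (MComp T f) (MComp g T)

/-- `ζ :⊆ Y ⇉ ℕ^ℕ` is a probe for `Y`: it is continuous, and for every continuous
`f :⊆ Y ⇉ ℕ^ℕ` there is a continuous `e :⊆ Y ⇉ Y` with `ζ ∘ e ⪯ f`. -/
def IsProbe {Y : Type u} (δY : RepSpace Y) (ζ : Y → Set (ℕ → ℕ)) : Prop :=
  MCts δY idRep ζ ∧
    ∀ f : Y → Set (ℕ → ℕ), MCts δY idRep f →
      ∃ e : Y → Set Y, MCts δY δY e ∧ Tightens (MComp ζ e) f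

/-- Parallelization of a partial multivalued function. -/
def Parallel {X : Type u} {Y : Type v} (f : X → Set Y) : (ℕ → X) → Set (ℕ → Y) :=
  fun xs => {ys | ∀ n, ys n ∈ f (xs n)}

/-! ### Games -/

/-- A strategy for player II: to each finite sequence of I's moves it assigns a natural
number or a pass (`none`). -/
abbrev Strategy := List ℕ → Option ℕ

/-- The move of player II (following `σ`) after I has played `x 0, …, x n`. -/
def respond (σ : Strategy) (x : ℕ → ℕ) (n : ℕ) : Option ℕ :=
  σ (List.ofFn fun i : Fin (n + 1) => x i)

/-- Player II plays natural numbers at infinitely many rounds of the run against `x`. -/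
def InfPlays (σ : Strategy) (x : ℕ → ℕ) : Prop :=
  {n | (respond σ x n).isSome = true}.Infinite

/-- The element of Baire space built by player II in the run against `x`
(the subsequence of her non-pass moves). -/
noncomputable def output (σ : Strategy) (x : ℕ → ℕ) : ℕ → ℕ :=
  fun k => (respond σ x (Nat.nth (fun n => (respond σ x n).isSome = true) k)).getD 0

/-- The partial multivalued function `δ_B ∘ ζ ∘ T ∘ δ_X :⊆ ℕ^ℕ ⇉ B` used in the winning
condition of the `(ζ, T)`-Wadge game. -/
def GameMap {X : Type u} {Y : Type v} {B : Type w} (δX : RepSpace X) (δB : RepSpace B)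
    (ζ : Y → Set (ℕ → ℕ)) (T : X → Set Y) : (ℕ → ℕ) → Set B :=
  MComp δB.toMV (MComp ζ (MComp T δX.toMV))

/-- `σ` is a winning strategy for player II in the `(ζ, T)`-Wadge game for `f`:
for every run `x` built by player I with `x ∈ dom (f ∘ δ_A)`, player II plays natural
numbers infinitely often, her output `y` lies in `dom (δ_B ∘ ζ ∘ T ∘ δ_X)`, and
`(δ_B ∘ ζ ∘ T ∘ δ_X)(y) ⊆ (f ∘ δ_A)(x)` (runs with `x ∉ dom (f ∘ δ_A)` are won by II
automatically). -/
def WadgeWinning {X : Type u} {Y : Type v} {A : Type w} {B : Type x}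
    (δX : RepSpace X) (δA : RepSpace A) (δB : RepSpace B)
    (ζ : Y → Set (ℕ → ℕ)) (T : X → Set Y) (f : A → Set B) (σ : Strategy) : Prop :=
  ∀ x : ℕ → ℕ, (MComp f δA.toMV x).Nonempty →
    InfPlays σ x ∧
    (GameMap δX δB ζ T (output σ x)).Nonempty ∧
    GameMap δX δB ζ T (output σ x) ⊆ MComp f δA.toMV x

/-! ### lim, isFinite and the Baire hierarchy -/

/-- The partial function `lim :⊆ ℕ^ℕ → ℕ^ℕ`, `lim(p) = lim_n (p)_n` (pointwise limit),
viewed as a partial multivalued function with singleton values on its domain. -/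
def limFn : (ℕ → ℕ) → Set (ℕ → ℕ) :=
  fun p => {q | ∀ k, ∀ᶠ n in atTop, col p n k = q k}

/-- The space `{0,1}^ℕ` of binary sequences. -/
abbrev BSeq : Type := {p : ℕ → ℕ // ∀ n, p n ≤ 1}

/-- `{0,1}^ℕ` with the identity representation (as a subspace of Baire space). -/
def repBSeq : RepSpace BSeq where
  dom := {p | ∀ n, p n ≤ 1}
  map := fun p => ⟨fun n => min (p n) 1, fun _ => min_le_right _ _⟩
  surj := fun x => ⟨x.1, x.2, Subtype.ext (funext fun n => min_eq_left (x.2 n))⟩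

/-- The two-point space `{0,1}`. -/
abbrev TwoPt : Type := {n : ℕ // n ≤ 1}

/-- The two-point space `{0,1}` represented by `δ(p) = p 0`. -/
def repTwo : RepSpace TwoPt where
  dom := {p | p 0 ≤ 1}
  map := fun p => ⟨min (p 0) 1, min_le_right _ _⟩
  surj := fun x => ⟨fun _ => x.1, x.2, Subtype.ext (min_eq_left x.2)⟩

open Classical in
/-- `isFinite(p) = 1` iff `{n : p n = 1}` is finite. -/
noncomputable def isFinite : BSeq → TwoPt :=
  fun p => if {n | p.1 n = 1}.Finite then ⟨1, le_refl 1⟩ else ⟨0, Nat.zero_le 1⟩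

/-- The finite levels of the Baire hierarchy: Baire class 0 functions are the continuous
ones, and Baire class `n+1` functions are pointwise limits of sequences of Baire class
`n` functions. -/
def BaireClass : ℕ → ((ℕ → ℕ) → (ℕ → ℕ)) → Prop
  | 0, f => Continuous f
  | n + 1, f => ∃ g : ℕ → (ℕ → ℕ) → (ℕ → ℕ),
      (∀ k, BaireClass n (g k)) ∧ ∀ x, Tendsto (fun k => g k x) atTop (𝓝 (f x))

/-!
A realizer of `h ∘ g ∘ k` is obtained by composing realizers, so the tightening gives a strong
reduction. Conversely, given a strong reduction `K ∘ G ∘ H`, take for `k` and `h` the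
multivalued functions realized by `H` and `K` on the relevant names. The reduction must work
for every realizer `G` of `g`, and a realizer may be altered at a single name `H p` to return
any name of any `g`-value there; hence `K` maps every name of every such value into `f`.
-/

section Realizes

variable {X Y Z : Type*} {δX : RepSpace X} {δY : RepSpace Y} {δZ : RepSpace Z}

theorem Realizes.comp {F G : PFunB} {f : X → Set Y} {g : Y → Set Z}
    (hG : Realizes δY δZ G g) (hF : Realizes δX δY F f) :
    Realizes δX δZ (G.comp F) (MComp g f) := by
  rintro p hp ⟨z, hgf, y, hy, -⟩
  obtain ⟨hpF, hFp, hfp⟩ := hF p hp ⟨y, hy⟩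
  obtain ⟨hFG, hGp, hgp⟩ := hG (F.toFun p) hFp (hgf _ hfp)
  exact ⟨⟨hpF, hFG⟩, hGp, hgf, _, hfp, hgp⟩

theorem Realizes.of_tightens {F : PFunB} {f f' : X → Set Y}
    (hF : Realizes δX δY F f') (hf : Tightens f' f) : Realizes δX δY F f := by
  intro p hp hne
  obtain ⟨hpF, hFp, hmem⟩ := hF p hp (hf _ hne).1
  exact ⟨hpF, hFp, (hf _ hne).2 hmem⟩

open Classical in
theorem Realizes.update {G : PFunB} {g : X → Set Y} (hG : Realizes δX δY G g)
    {r q : ℕ → ℕ} (hq : q ∈ δY.dom) (hqr : δY.map q ∈ g (δX.map r)) :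
    Realizes δX δY ⟨G.dom, Function.update G.toFun r q⟩ g := by
  intro p hp hne
  refine ⟨(hG p hp hne).1, ?_⟩
  rcases eq_or_ne p r with rfl | hpr
  · simpa only [Function.update_self] using ⟨hq, hqr⟩
  · simpa only [Function.update_of_ne hpr] using (hG p hp hne).2

def namesDom (δX : RepSpace X) (f : X → Set Y) : Set (ℕ → ℕ) :=
  {p | p ∈ δX.dom ∧ (f (δX.map p)).Nonempty}

theorem exists_realizes_dom_eq_namesDom (δX : RepSpace X) (δY : RepSpace Y)
    (f : X → Set Y) : ∃ G : PFunB, G.dom = namesDom δX f ∧ Realizes δX δY G f := by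
  have hval : ∀ p ∈ namesDom δX f, ∃ q ∈ δY.dom, δY.map q ∈ f (δX.map p) := by
    rintro p ⟨-, y, hy⟩
    obtain ⟨q, hq, rfl⟩ := δY.surj y
    exact ⟨q, hq, hy⟩
  choose! G hGdom hGmem using hval
  exact ⟨⟨namesDom δX f, G⟩, rfl, fun p hp hne =>
    ⟨⟨hp, hne⟩, hGdom p ⟨hp, hne⟩, hGmem p ⟨hp, hne⟩⟩⟩

variable (δX δY) in
def PFunB.realizedOn (F : PFunB) (U : Set X) : X → Set Y :=
  fun x => {y | x ∈ U ∧ ∃ p ∈ δX.dom, δX.map p = x ∧ δY.map (F.toFun p) = y}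

theorem PFunB.realizes_realizedOn {F : PFunB} {U : Set X}
    (hF : ∀ p ∈ δX.dom, δX.map p ∈ U → p ∈ F.dom ∧ F.toFun p ∈ δY.dom) :
    Realizes δX δY F (F.realizedOn δX δY U) := by
  rintro p hp ⟨y, hU, -⟩
  exact ⟨(hF p hp hU).1, (hF p hp hU).2, hU, p, hp, rfl, rfl⟩

end Realizes

theorem tightens_mcomp_mcomp_of {A B C D : Type*} {f : A → Set B} {k : A → Set C}
    {g : C → Set D} {h : D → Set B}
    (hkgh : ∀ a, (f a).Nonempty → (k a).Nonempty ∧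
      ∀ c ∈ k a, (g c).Nonempty ∧ ∀ d ∈ g c, (h d).Nonempty ∧ h d ⊆ f a) :
    Tightens (MComp h (MComp g k)) f := by
  intro a ha
  obtain ⟨⟨c, hc⟩, hk⟩ := hkgh a ha
  have hgk : ∀ d ∈ MComp g k a, (h d).Nonempty ∧ h d ⊆ f a := by
    rintro d ⟨-, c', hc', hd⟩
    exact (hk c' hc').2 d hd
  obtain ⟨d, hd⟩ := (hk c hc).1
  obtain ⟨b, hb⟩ := ((hk c hc).2 d hd).1
  have hdk : d ∈ MComp g k a := ⟨fun c' hc' => (hk c' hc').1, c, hc, hd⟩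
  refine ⟨⟨b, fun d' hd' => (hgk d' hd').1, d, hdk, hb⟩, ?_⟩
  rintro b' ⟨-, d', hd', hb'⟩
  exact (hgk d' hd').2 hb'

section StrongWc

variable {A B C D : Type*} {δA : RepSpace A} {δB : RepSpace B} {δC : RepSpace C}
  {δD : RepSpace D} {f : A → Set B} {g : C → Set D}

theorem StrongWc.of_tightens {k : A → Set C} {h : D → Set B}
    (hk : MCts δA δC k) (hh : MCts δD δB h) (hf : Tightens (MComp h (MComp g k)) f) :
    StrongWc δA δB δC δD f g := by
  obtain ⟨H, hHc, hH⟩ := hk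
  obtain ⟨K, hKc, hK⟩ := hh
  exact ⟨K, H, hKc, hHc, fun G hG => (hK.comp (hG.comp hH)).of_tightens hf⟩

variable {K H : PFunB}

theorem mapsTo_namesDom_of_reduction
    (hred : ∀ G : PFunB, Realizes δC δD G g → Realizes δA δB (K.comp (G.comp H)) f)
    {p : ℕ → ℕ} (hp : p ∈ namesDom δA f) :
    p ∈ H.dom ∧ H.toFun p ∈ namesDom δC g := by
  obtain ⟨G, hGdom, hG⟩ := exists_realizes_dom_eq_namesDom δC δD g
  obtain ⟨⟨hpH, hHG⟩, -⟩ := (hred G hG p hp.1 hp.2).1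
  exact ⟨hpH, hGdom ▸ hHG⟩

theorem backward_realizes_of_reduction
    (hred : ∀ G : PFunB, Realizes δC δD G g → Realizes δA δB (K.comp (G.comp H)) f)
    {p q : ℕ → ℕ} (hp : p ∈ namesDom δA f)
    (hq : q ∈ δD.dom) (hqg : δD.map q ∈ g (δC.map (H.toFun p))) :
    q ∈ K.dom ∧ K.toFun q ∈ δB.dom ∧ δB.map (K.toFun q) ∈ f (δA.map p) := by
  obtain ⟨G, -, hG⟩ := exists_realizes_dom_eq_namesDom δC δD g
  have hupd := hred _ (hG.update hq hqg) p hp.1 hp.2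
  simpa only [PFunB.comp, Function.update_self] using And.intro hupd.1.2 hupd.2

theorem StrongWc.exists_tightens (hfg : StrongWc δA δB δC δD f g) :
    ∃ (k : A → Set C) (h : D → Set B),
      MCts δA δC k ∧ MCts δD δB h ∧ Tightens (MComp h (MComp g k)) f := by
  obtain ⟨K, H, hKc, hHc, hred⟩ := hfg
  let k := H.realizedOn δA δC {a | (f a).Nonempty}
  let h := K.realizedOn δD δB {d | ∃ p ∈ namesDom δA f, d ∈ g (δC.map (H.toFun p))}
  refine ⟨k, h, ⟨H, hHc, ?_⟩, ⟨K, hKc, ?_⟩, ?_⟩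
  · exact PFunB.realizes_realizedOn fun p hp hf =>
      (mapsTo_namesDom_of_reduction hred ⟨hp, hf⟩).imp_right And.left
  · exact PFunB.realizes_realizedOn fun q hq ⟨p, hp, hd⟩ =>
      (backward_realizes_of_reduction hred hp hq hd).imp_right And.left
  refine tightens_mcomp_mcomp_of fun a ha => ⟨?_, ?_⟩
  · obtain ⟨p, hp, rfl⟩ := δA.surj a
    exact ⟨_, ha, p, hp, rfl, rfl⟩
  rintro c ⟨-, p, hp, rfl, rfl⟩
  refine ⟨(mapsTo_namesDom_of_reduction hred ⟨hp, ha⟩).2.2, fun d hd => ⟨?_, ?_⟩⟩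
  · obtain ⟨q, hq, rfl⟩ := δD.surj d
    exact ⟨_, ⟨p, ⟨hp, ha⟩, hd⟩, q, hq, rfl, rfl⟩
  · rintro b ⟨-, q, hq, rfl, rfl⟩
    exact (backward_realizes_of_reduction hred ⟨hp, ha⟩ hq hd).2.2

end StrongWc

/-- `f ≤_sW^c g` iff there exist continuous partial multivalued `k :⊆ A ⇉ C` and
`h :⊆ D ⇉ B` such that `h ∘ g ∘ k ⪯ f`. -/
theorem strongWc_iff_tightens {A B C D : Type*}
    (δA : RepSpace A) (δB : RepSpace B) (δC : RepSpace C) (δD : RepSpace D)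
    (f : A → Set B) (g : C → Set D) :
    StrongWc δA δB δC δD f g ↔
      ∃ (k : A → Set C) (h : D → Set B),
        MCts δA δC k ∧ MCts δD δB h ∧ Tightens (MComp h (MComp g k)) f :=
  ⟨StrongWc.exists_tightens, fun ⟨_, _, hk, hh, hf⟩ => StrongWc.of_tightens hk hh hf⟩
end

section
/- Let T :⊆ (X, δ_X) ⇉ (Y, δ_Y) be transparent and let (Z, δ_Z) be a subspace of (Y, δ_Y). Then the partial multivalued function S :⊆ (X, δ_X) ⇉ (Z, δ_Z) given by restricting T to {x ∈ dom(T) : T(x) ⊆ Z} is also transparent. -/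
open Filter Topology

/-!
A continuous `g :⊆ Z ⇉ Z` extends to a continuous `g' :⊆ Y ⇉ Y` with the same realizers,
because the names of points of `Z` are exactly the names of points of `Y` that lie in `Z`.
Transparency of `T` yields `f` with `T ∘ f ⪯ g' ∘ T`. Whenever `g ∘ S` is defined at `x`,
`g' ∘ T` takes values in `Z` at `x`, so `T ∘ f` does too; there `S ∘ f` and `g ∘ S` are just
`T ∘ f` and `g' ∘ T` read inside `Z`.
-/

section

variable {X Y : Type*} {Z : Set Y}

def restrictCodomain (T : X → Set Y) (Z : Set Y) : X → Set Z :=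
  fun x => {z : Z | (z : Y) ∈ T x ∧ T x ⊆ Z}

def extendSubtype (g : Z → Set Z) : Y → Set Y :=
  fun y => {w | ∃ hy : y ∈ Z, w ∈ Subtype.val '' g ⟨y, hy⟩}

theorem Realizes.extendSubtype {δY : RepSpace Y} {δZ : RepSpace Z}
    (hdom : δZ.dom = {p | p ∈ δY.dom ∧ δY.map p ∈ Z})
    (hmap : ∀ p ∈ δZ.dom, (δZ.map p : Y) = δY.map p)
    {G : PFunB} {g : Z → Set Z} (hG : Realizes δZ δZ G g) :
    Realizes δY δY G (extendSubtype g) := by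
  rintro p hp ⟨-, hpZ, z, hz, -⟩
  have hpZdom : p ∈ δZ.dom := hdom ▸ ⟨hp, hpZ⟩
  have hname : δZ.map p = ⟨δY.map p, hpZ⟩ := Subtype.ext (hmap p hpZdom)
  obtain ⟨hpG, hGdom, hGval⟩ := hG p hpZdom (hname ▸ ⟨z, hz⟩)
  have hGdomY : G.toFun p ∈ δY.dom ∧ _ := hdom ▸ hGdom
  exact ⟨hpG, hGdomY.1, hpZ, _, hname ▸ hGval, hmap _ hGdom⟩

theorem MCts.extendSubtype {δY : RepSpace Y} {δZ : RepSpace Z}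
    (hdom : δZ.dom = {p | p ∈ δY.dom ∧ δY.map p ∈ Z})
    (hmap : ∀ p ∈ δZ.dom, (δZ.map p : Y) = δY.map p)
    {g : Z → Set Z} (hg : MCts δZ δZ g) : MCts δY δY (extendSubtype g) :=
  let ⟨G, hGc, hG⟩ := hg
  ⟨G, hGc, hG.extendSubtype hdom hmap⟩

theorem mcomp_eq_empty_of_not_subset {W : Type*} {T : X → Set Y} {g : Z → Set W} {x : X}
    (hx : ¬T x ⊆ Z) : MComp g (restrictCodomain T Z) x = ∅ :=
  Set.eq_empty_of_forall_notMem fun _ ⟨_, _, hz, _⟩ => hx hz.2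

theorem image_val_mcomp_extendSubtype {T : X → Set Y} {g : Z → Set Z} {x : X} (hx : T x ⊆ Z) :
    Subtype.val '' MComp g (restrictCodomain T Z) x = MComp (extendSubtype g) T x := by
  ext w
  constructor
  · rintro ⟨z, ⟨hall, z', ⟨hz'T, -⟩, hz⟩, rfl⟩
    refine ⟨fun y hy => ?_, z', hz'T, z'.2, z, hz, rfl⟩
    obtain ⟨u, hu⟩ := hall ⟨y, hx hy⟩ ⟨hy, hx⟩
    exact ⟨u, hx hy, u, hu, rfl⟩
  · rintro ⟨hall, y, hyT, hyZ, z, hz, rfl⟩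
    refine ⟨z, ⟨fun z' hz' => ?_, ⟨y, hyZ⟩, ⟨hyT, hx⟩, hz⟩, rfl⟩
    obtain ⟨-, hz'Z, u, hu, -⟩ := hall z' hz'.1
    exact ⟨u, hu⟩

theorem image_val_mcomp_restrictCodomain {W : Type*} {T : X → Set Y} {f : W → Set X} {w : W}
    (hw : MComp T f w ⊆ Z) :
    Subtype.val '' MComp (restrictCodomain T Z) f w = MComp T f w := by
  ext y
  constructor
  · rintro ⟨z, ⟨hall, x, hx, hzT, -⟩, rfl⟩
    refine ⟨fun x' hx' => ?_, x, hx, hzT⟩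
    obtain ⟨u, hu⟩ := hall x' hx'
    exact ⟨u, hu.1⟩
  · intro hy
    obtain ⟨hall, x, hx, hyT⟩ := id hy
    have hTZ : ∀ x' ∈ f w, T x' ⊆ Z := fun x' hx' u hu => hw ⟨hall, x', hx', hu⟩
    refine ⟨⟨y, hw hy⟩, ⟨fun x' hx' => ?_, x, hx, hyT, hTZ x hx⟩, rfl⟩
    obtain ⟨u, hu⟩ := hall x' hx'
    exact ⟨⟨u, hTZ x' hx' hu⟩, hu, hTZ x' hx'⟩

theorem Tightens.restrictCodomain {T : X → Set Y} {f : X → Set X} {g : Z → Set Z}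
    (h : Tightens (MComp T f) (MComp (extendSubtype g) T)) :
    Tightens (MComp (restrictCodomain T Z) f) (MComp g (restrictCodomain T Z)) := by
  intro x hx
  have hxZ : T x ⊆ Z := by_contra fun hxZ => hx.ne_empty (mcomp_eq_empty_of_not_subset hxZ)
  obtain ⟨hne, hsub⟩ := h x (image_val_mcomp_extendSubtype hxZ ▸ hx.image _)
  rw [← image_val_mcomp_extendSubtype hxZ] at hsub
  have hTfZ : MComp T f x ⊆ Z := hsub.trans (Subtype.coe_image_subset _ _)
  rw [← image_val_mcomp_restrictCodomain hTfZ] at hne hsub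
  exact ⟨hne.of_image, (Set.image_subset_image_iff Subtype.val_injective).1 hsub⟩

end

/-- If `T :⊆ X ⇉ Y` is transparent and `(Z, δ_Z)` is a subspace of `(Y, δ_Y)`, then the
restriction `S :⊆ X ⇉ Z` of `T` to `{x ∈ dom T : T x ⊆ Z}` is also transparent. -/
theorem transparent_restrict_codomain {X Y : Type*}
    (δX : RepSpace X) (δY : RepSpace Y) (Z : Set Y) (δZ : RepSpace Z)
    (hdom : δZ.dom = {p | p ∈ δY.dom ∧ δY.map p ∈ Z})
    (hmap : ∀ p ∈ δZ.dom, (δZ.map p : Y) = δY.map p)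
    (T : X → Set Y) (hT : Transparent δX δY T) :
    Transparent δX δZ (fun x => {z : Z | (z : Y) ∈ T x ∧ T x ⊆ Z}) := by
  intro g hg
  obtain ⟨f, hf, hfT⟩ := hT _ (hg.extendSubtype hdom hmap)
  exact ⟨f, hf, hfT.restrictCodomain⟩
end

section
/- Every probe ζ :⊆ Y ⇉ ℕ^ℕ for a represented space Y is surjective (for every q ∈ ℕ^ℕ there is y ∈ dom(ζ) with q ∈ ζ(y)) and is transparent as a partial multivalued function from Y to ℕ^ℕ (where ℕ^ℕ carries the identity representation). -/
open Filter Topology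

/-! A probe `ζ` lets every continuous `f : Y ⇉ ℕ^ℕ` be realized as `ζ ∘ e` with `e : Y ⇉ Y`
continuous. Applied to a constant `f ≡ q` this exhibits `q` as a value of `ζ`; applied to
`g ∘ ζ` it is exactly transparency, since `g ∘ ζ` is continuous whenever `g` is. -/

theorem PFunB.IsContinuous.comp {F G : PFunB} (hF : F.IsContinuous) (hG : G.IsContinuous) :
    (F.comp G).IsContinuous :=
  ContinuousOn.comp (f := G.toFun) (s := (F.comp G).dom) hF (hG.mono fun _ hp => hp.1)
    fun _ hp => hp.2

theorem MCts.comp {X Y Z : Type*} {δX : RepSpace X} {δY : RepSpace Y}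
    {δZ : RepSpace Z} {g : Y → Set Z} {f : X → Set Y} (hg : MCts δY δZ g) (hf : MCts δX δY f) :
    MCts δX δZ (MComp g f) := by
  obtain ⟨G, hGc, hG⟩ := hg
  obtain ⟨F, hFc, hF⟩ := hf
  refine ⟨G.comp F, hGc.comp hFc, fun p hp ⟨_, hdom, y, hy, _⟩ => ?_⟩
  obtain ⟨hpF, hFp, hFf⟩ := hF p hp ⟨y, hy⟩
  obtain ⟨hFG, hGp, hGg⟩ := hG (F.toFun p) hFp (hdom _ hFf)
  exact ⟨⟨hpF, hFG⟩, hGp, hdom, _, hFf, hGg⟩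

theorem mCts_const {X Y : Type*} (δX : RepSpace X) (δY : RepSpace Y) (y : Y) :
    MCts δX δY fun _ => {y} := by
  obtain ⟨q, hq, rfl⟩ := δY.surj y
  exact ⟨⟨Set.univ, fun _ => q⟩, continuousOn_const, fun _ _ _ => ⟨trivial, hq, rfl⟩⟩

namespace IsProbe

variable {Y : Type*} {δY : RepSpace Y} {ζ : Y → Set (ℕ → ℕ)}

theorem surjective (hζ : IsProbe δY ζ) (q : ℕ → ℕ) : ∃ y, q ∈ ζ y := by
  obtain ⟨e, -, he⟩ := hζ.2 _ (mCts_const δY idRep q)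
  -- `δY.map` is total, so `Y` is inhabited.
  obtain ⟨⟨z, hz⟩, hsub⟩ := he (δY.map fun _ => 0) ⟨q, rfl⟩
  have hzq : z = q := hsub hz
  obtain ⟨-, y, -, hzy⟩ := hz
  exact ⟨y, hzq ▸ hzy⟩

theorem transparent (hζ : IsProbe δY ζ) : Transparent δY idRep ζ := fun _ hg =>
  hζ.2 _ (hg.comp hζ.1)

end IsProbe

/-- Every probe `ζ :⊆ Y ⇉ ℕ^ℕ` is surjective and transparent. -/
theorem probe_surjective_and_transparent {Y : Type*} (δY : RepSpace Y)
    (ζ : Y → Set (ℕ → ℕ)) (hζ : IsProbe δY ζ) :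
    (∀ q : ℕ → ℕ, ∃ y : Y, q ∈ ζ y) ∧ Transparent δY idRep ζ :=
  ⟨hζ.surjective, hζ.transparent⟩
end

section
/- Let T :⊆ X ⇉ Y and S :⊆ Y ⇉ Z be partial multivalued functions between represented spaces which are both cylinders, and suppose T is transparent. Then for all partial multivalued functions T' :⊆ A ⇉ B and S' :⊆ B ⇉ C between represented spaces with S' ≤_W^c S and T' ≤_W^c T, it holds that S' ∘ T' ≤_W^c S ∘ T. -/
/-!
Since `T` and `S` are cylinders, both reductions can be made strong: the outer reduction
function no longer needs the original input. Writing `(K₁, H₁)` and `(K₂, H₂)` for the strong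
reductions of `T'` to `T` and of `S'` to `S`, the continuous name transformation `H₂ ∘ K₁` turns
`T`-solutions into `S`-instances. Transparency of `T` provides a continuous `f` on `X`, with
realizer `F`, such that `T ∘ f` tightens this transformation precomposed with `T`; then
`S' ∘ T'` reduces (even strongly) to `S ∘ T` via `F ∘ H₁` and `K₂`.
-/

open Filter Topology

section Realizers

variable {X Y : Type*} (δX : RepSpace X) (δY : RepSpace Y)

theorem exists_realizes (f : X → Set Y) :
    ∃ G : PFunB, Realizes δX δY G f ∧ G.dom = {p | p ∈ δX.dom ∧ (f (δX.map p)).Nonempty} := by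
  have hname : ∀ p, ∃ r, p ∈ δX.dom → (f (δX.map p)).Nonempty →
      r ∈ δY.dom ∧ δY.map r ∈ f (δX.map p) := by
    intro p
    by_cases hf : (f (δX.map p)).Nonempty
    · obtain ⟨r, hr, hry⟩ := δY.surj hf.some
      exact ⟨r, fun _ _ => ⟨hr, hry ▸ hf.some_mem⟩⟩
    · exact ⟨p, fun _ h => absurd h hf⟩
  choose R hR using hname
  exact ⟨⟨{p | p ∈ δX.dom ∧ (f (δX.map p)).Nonempty}, R⟩,
    fun p hp hf => ⟨⟨hp, hf⟩, hR p hp hf⟩, rfl⟩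

open Classical in
variable {δX δY} in
theorem exists_realizes_apply_eq {f : X → Set Y} {p₀ r : ℕ → ℕ}
    (hr : r ∈ δY.dom ∧ δY.map r ∈ f (δX.map p₀)) :
    ∃ G : PFunB, Realizes δX δY G f ∧ G.toFun p₀ = r := by
  obtain ⟨G, hG, -⟩ := exists_realizes δX δY f
  refine ⟨⟨Set.univ, Function.update G.toFun p₀ r⟩, fun p hp hf => ?_, by simp⟩
  rcases eq_or_ne p p₀ with rfl | hne
  · simpa using hr
  · simpa [Function.update_of_ne hne] using (hG p hp hf).2

end Realizers

def weihrauchRealizer (K : PFunB2) (H G : PFunB) : PFunB :=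
  ⟨{p | p ∈ H.dom ∧ H.toFun p ∈ G.dom ∧ (p, G.toFun (H.toFun p)) ∈ K.dom},
    fun p => K.toFun (p, G.toFun (H.toFun p))⟩

def PFunB.ofSnd (K : PFunB) : PFunB2 := ⟨{pq | pq.2 ∈ K.dom}, fun pq => K.toFun pq.2⟩

theorem PFunB.IsContinuous.ofSnd {K : PFunB} (hK : K.IsContinuous) :
    K.ofSnd.IsContinuous := by
  unfold PFunB.IsContinuous at hK
  exact hK.comp continuous_snd.continuousOn fun _ h => h

theorem PFunB.comp_comp_eq_weihrauchRealizer (K G H : PFunB) :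
    K.comp (G.comp H) = weihrauchRealizer K.ofSnd H G := by
  simp only [PFunB.comp, weihrauchRealizer, PFunB.ofSnd, PFunB.mk.injEq, and_true]
  ext p
  exact and_assoc

def WcWitness {A B X Y : Type*} (δA : RepSpace A) (δB : RepSpace B) (δX : RepSpace X)
    (δY : RepSpace Y) (f : A → Set B) (g : X → Set Y) (K : PFunB2) (H : PFunB) : Prop :=
  ∀ p ∈ δA.dom, (f (δA.map p)).Nonempty →
    p ∈ H.dom ∧ H.toFun p ∈ δX.dom ∧ (g (δX.map (H.toFun p))).Nonempty ∧
    ∀ q ∈ δY.dom, δY.map q ∈ g (δX.map (H.toFun p)) →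
      (p, q) ∈ K.dom ∧ K.toFun (p, q) ∈ δB.dom ∧ δB.map (K.toFun (p, q)) ∈ f (δA.map p)

section Witnesses

variable {A B X Y : Type*} {δA : RepSpace A} {δB : RepSpace B} {δX : RepSpace X}
  {δY : RepSpace Y} {f : A → Set B} {g : X → Set Y}

theorem forall_realizes_weihrauchRealizer_iff {K : PFunB2} {H : PFunB} :
    (∀ G, Realizes δX δY G g → Realizes δA δB (weihrauchRealizer K H G) f) ↔
      WcWitness δA δB δX δY f g K H := by
  constructor
  · intro hall p hp hf
    obtain ⟨G, hG, hGdom⟩ := exists_realizes δX δY g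
    obtain ⟨⟨hpH, hHG, -⟩, -, -⟩ := hall G hG p hp hf
    rw [hGdom] at hHG
    refine ⟨hpH, hHG.1, hHG.2, fun q hq hqg => ?_⟩
    obtain ⟨G', hG', hG'q⟩ := exists_realizes_apply_eq (δX := δX) ⟨hq, hqg⟩
    obtain ⟨⟨-, -, hKdom⟩, hKB, hKf⟩ := hall G' hG' p hp hf
    simp only [weihrauchRealizer, hG'q] at hKdom hKB hKf
    exact ⟨hKdom, hKB, hKf⟩
  · intro hK G hG p hp hf
    obtain ⟨hpH, hHX, hg, hsol⟩ := hK p hp hf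
    obtain ⟨hHG, hGY, hGg⟩ := hG _ hHX hg
    obtain ⟨hKdom, hKB, hKf⟩ := hsol _ hGY hGg
    exact ⟨⟨hpH, hHG, hKdom⟩, hKB, hKf⟩

theorem wc_iff_exists_wcWitness : Wc δA δB δX δY f g ↔ ∃ (K : PFunB2) (H : PFunB),
    K.IsContinuous ∧ H.IsContinuous ∧ WcWitness δA δB δX δY f g K H :=
  exists_congr fun _ => exists_congr fun _ =>
    and_congr_right' <| and_congr_right' forall_realizes_weihrauchRealizer_iff

theorem strongWc_iff_exists_wcWitness : StrongWc δA δB δX δY f g ↔ ∃ K H : PFunB,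
    K.IsContinuous ∧ H.IsContinuous ∧ WcWitness δA δB δX δY f g K.ofSnd H := by
  simp only [StrongWc, PFunB.comp_comp_eq_weihrauchRealizer,
    forall_realizes_weihrauchRealizer_iff]

theorem StrongWc.wc (h : StrongWc δA δB δX δY f g) : Wc δA δB δX δY f g := by
  obtain ⟨K, H, hK, hH, hKH⟩ := strongWc_iff_exists_wcWitness.1 h
  exact wc_iff_exists_wcWitness.2 ⟨K.ofSnd, H, hK.ofSnd, hH, hKH⟩

end Witnesses

theorem continuous_leftB : Continuous leftB :=
  continuous_pi fun _ => continuous_apply _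

theorem continuous_rightB : Continuous rightB :=
  continuous_pi fun _ => continuous_apply _

theorem continuous_pairB :
    Continuous fun pq : (ℕ → ℕ) × (ℕ → ℕ) => pairB pq.1 pq.2 := by
  refine continuous_pi fun n => ?_
  by_cases hn : n % 2 = 0
  · simp only [pairB, hn, if_true]
    fun_prop
  · simp only [pairB, hn, if_false]
    fun_prop

section Cylinders

variable {A B X Y : Type*} {δA : RepSpace A} {δB : RepSpace B} {δX : RepSpace X}
  {δY : RepSpace Y} {f : A → Set B} {g : X → Set Y}

theorem idProd_nonempty_iff {a : ℕ → ℕ} {x : X} : (idProd g (a, x)).Nonempty ↔ (g x).Nonempty :=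
  ⟨fun ⟨qy, _, hy⟩ => ⟨qy.2, hy⟩, fun ⟨y, hy⟩ => ⟨(a, y), rfl, hy⟩⟩

theorem map_mem_idProd_iff {r s : ℕ → ℕ} :
    (idRep.prod δY).map s ∈ idProd g ((idRep.prod δX).map r) ↔
      leftB s = leftB r ∧ δY.map (rightB s) ∈ g (δX.map (rightB r)) :=
  Iff.rfl

/-- Feeding the input name `p` through the cylinder alongside the instance lets the
outer reduction function forget `p`. -/
theorem Wc.strongWc_of_isCylinder (hg : IsCylinder δX δY g) (h : Wc δA δB δX δY f g) :
    StrongWc δA δB δX δY f g := by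
  obtain ⟨K, H, hK, hH, hKH⟩ := wc_iff_exists_wcWitness.1 h
  obtain ⟨Kc, Hc, hKc, hHc, hcyl⟩ := strongWc_iff_exists_wcWitness.1 hg
  let tag : PFunB := ⟨H.dom, fun p => pairB p (H.toFun p)⟩
  let untag : PFunB := ⟨{r | (leftB r, rightB r) ∈ K.dom}, fun r => K.toFun (leftB r, rightB r)⟩
  have htag : tag.IsContinuous :=
    continuous_pairB.comp_continuousOn (continuousOn_id.prodMk hH)
  have huntag : untag.IsContinuous :=
    hK.comp (continuous_leftB.prodMk continuous_rightB).continuousOn fun _ h => h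
  refine strongWc_iff_exists_wcWitness.2
    ⟨untag.comp Kc, Hc.comp tag, huntag.comp hKc, hHc.comp htag, ?_⟩
  intro p hp hf
  obtain ⟨hpH, hHX, hgH, hsol⟩ := hKH p hp hf
  have htagX : tag.toFun p ∈ (idRep.prod δX).dom := ⟨trivial, by simpa [tag, rightB_pairB]⟩
  have htagg : (idProd g ((idRep.prod δX).map (tag.toFun p))).Nonempty :=
    idProd_nonempty_iff.2 (by simpa [tag, RepSpace.prod, rightB_pairB])
  obtain ⟨htagHc, hHcX, hgHc, hcsol⟩ := hcyl _ htagX htagg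
  refine ⟨⟨hpH, htagHc⟩, hHcX, hgHc, fun q hq hqg => ?_⟩
  obtain ⟨hqKc, hKcY, hKcg⟩ := hcsol q hq hqg
  obtain ⟨hleft, hright⟩ := map_mem_idProd_iff.1 hKcg
  have hKcp : leftB (Kc.toFun q) = p := hleft.trans (leftB_pairB _ _)
  have hKcg' : δY.map (rightB (Kc.toFun q)) ∈ g (δX.map (H.toFun p)) := by
    simpa [tag, PFunB.ofSnd, rightB_pairB] using hright
  obtain ⟨hKdom, hKB, hKf⟩ := hsol _ hKcY.2 hKcg'
  refine ⟨⟨hqKc, ?_⟩, ?_, ?_⟩ <;> simpa [untag, PFunB.comp, PFunB.ofSnd, hKcp]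

end Cylinders

section Composition

variable {W X Y : Type*} {δX : RepSpace X} {δY : RepSpace Y}

def PFunB.inducedMV (δX : RepSpace X) (δY : RepSpace Y) (Φ : PFunB) : X → Set Y :=
  fun x => {y | (∀ q ∈ δX.dom, δX.map q = x → q ∈ Φ.dom ∧ Φ.toFun q ∈ δY.dom) ∧
    ∃ q ∈ δX.dom, δX.map q = x ∧ δY.map (Φ.toFun q) = y}

theorem PFunB.realizes_inducedMV (Φ : PFunB) : Realizes δX δY Φ (Φ.inducedMV δX δY) := by
  rintro q hq ⟨-, hall, -⟩
  obtain ⟨hqΦ, hΦY⟩ := hall q hq rfl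
  exact ⟨hqΦ, hΦY, hall, q, hq, rfl, rfl⟩

theorem PFunB.nonempty_mcomp_inducedMV {Φ : PFunB} {T : W → Set X} {w : W}
    (hT : (T w).Nonempty)
    (hgood : ∀ q ∈ δX.dom, δX.map q ∈ T w → q ∈ Φ.dom ∧ Φ.toFun q ∈ δY.dom) :
    (MComp (Φ.inducedMV δX δY) T w).Nonempty := by
  have hΦ : ∀ x ∈ T w, (Φ.inducedMV δX δY x).Nonempty := by
    intro x hx
    obtain ⟨q, hq, rfl⟩ := δX.surj x
    exact ⟨_, fun q' hq' hq'x => hgood q' hq' (hq'x ▸ hx), q, hq, rfl, rfl⟩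
  obtain ⟨x, hx⟩ := hT
  obtain ⟨y, hy⟩ := hΦ x hx
  exact ⟨y, hΦ, x, hx, hy⟩

theorem nonempty_of_mcomp_nonempty {S : X → Set Y} {T : W → Set X} {w : W}
    (h : (MComp S T w).Nonempty) : (T w).Nonempty :=
  let ⟨_, _, x, hx, _⟩ := h
  ⟨x, hx⟩

theorem mcomp_nonempty_and_forall_name {S : X → Set Y} {T : W → Set X} {w : W}
    {P : (ℕ → ℕ) → Prop} (hT : (T w).Nonempty)
    (hS : ∀ x ∈ T w, (S x).Nonempty ∧ ∀ s ∈ δY.dom, δY.map s ∈ S x → P s) :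
    (MComp S T w).Nonempty ∧ ∀ s ∈ δY.dom, δY.map s ∈ MComp S T w → P s := by
  obtain ⟨x, hx⟩ := hT
  obtain ⟨y, hy⟩ := (hS x hx).1
  refine ⟨⟨y, fun x' hx' => (hS x' hx').1, x, hx, hy⟩, ?_⟩
  rintro s hs ⟨-, x', hx', hsx'⟩
  exact (hS x' hx').2 s hs hsx'

end Composition

section Transparency

variable {A B C X Y Z : Type*} {δA : RepSpace A} {δB : RepSpace B} {δC : RepSpace C}
  {δX : RepSpace X} {δY : RepSpace Y} {δZ : RepSpace Z}
  {T' : A → Set B} {S' : B → Set C} {T : X → Set Y} {S : Y → Set Z} {K₁ H₁ K₂ H₂ : PFunB}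

theorem WcWitness.comp_name (h₁ : WcWitness δA δB δX δY T' T K₁.ofSnd H₁)
    (h₂ : WcWitness δB δC δY δZ S' S K₂.ofSnd H₂) {p : ℕ → ℕ} (hp : p ∈ δA.dom)
    (hST : (MComp S' T' (δA.map p)).Nonempty) {q : ℕ → ℕ} (hq : q ∈ δY.dom)
    (hqT : δY.map q ∈ T (δX.map (H₁.toFun p))) :
    q ∈ (H₂.comp K₁).dom ∧ (H₂.comp K₁).toFun q ∈ δY.dom ∧
      (S (δY.map ((H₂.comp K₁).toFun q))).Nonempty ∧
      ∀ s ∈ δZ.dom, δZ.map s ∈ S (δY.map ((H₂.comp K₁).toFun q)) →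
        s ∈ K₂.dom ∧ K₂.toFun s ∈ δC.dom ∧ δC.map (K₂.toFun s) ∈ MComp S' T' (δA.map p) := by
  obtain ⟨-, -, -, hsol₁⟩ := h₁ p hp (nonempty_of_mcomp_nonempty hST)
  obtain ⟨-, hS'dom, -⟩ := hST
  obtain ⟨hqK₁, hK₁B, hK₁T'⟩ := hsol₁ q hq hqT
  obtain ⟨hH₂, hH₂Y, hSne, hsol₂⟩ := h₂ _ hK₁B (hS'dom _ hK₁T')
  refine ⟨⟨hqK₁, hH₂⟩, hH₂Y, hSne, fun s hs hsS => ?_⟩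
  obtain ⟨hsK₂, hK₂C, hK₂S'⟩ := hsol₂ s hs hsS
  exact ⟨hsK₂, hK₂C, hS'dom, _, hK₁T', hK₂S'⟩

theorem WcWitness.mcomp_of_tightens (h₁ : WcWitness δA δB δX δY T' T K₁.ofSnd H₁)
    (h₂ : WcWitness δB δC δY δZ S' S K₂.ofSnd H₂) {f : X → Set X} {F : PFunB}
    (hF : Realizes δX δX F f)
    (htight : Tightens (MComp T f) (MComp ((H₂.comp K₁).inducedMV δY δY) T)) :
    WcWitness δA δC δX δZ (MComp S' T') (MComp S T) K₂.ofSnd (F.comp H₁) := by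
  intro p hp hST
  obtain ⟨hpH₁, hH₁X, hTne, -⟩ := h₁ p hp (nonempty_of_mcomp_nonempty hST)
  have hname := fun q (hq : q ∈ δY.dom) hqT => h₁.comp_name h₂ hp hST hq hqT
  obtain ⟨hTfne, hTf⟩ := htight _ <| PFunB.nonempty_mcomp_inducedMV hTne
    fun q hq hqT => ⟨(hname q hq hqT).1, (hname q hq hqT).2.1⟩
  obtain ⟨y, hTdom, x', hx', -⟩ := hTfne
  obtain ⟨hH₁F, hFX, hFf⟩ := hF _ hH₁X ⟨x', hx'⟩
  have hgood : ∀ y₁ ∈ T (δX.map (F.toFun (H₁.toFun p))), (S y₁).Nonempty ∧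
      ∀ s ∈ δZ.dom, δZ.map s ∈ S y₁ →
        s ∈ K₂.dom ∧ K₂.toFun s ∈ δC.dom ∧ δC.map (K₂.toFun s) ∈ MComp S' T' (δA.map p) := by
    intro y₁ hy₁
    obtain ⟨-, y, hy, -, q, hq, rfl, rfl⟩ := hTf ⟨hTdom, _, hFf, hy₁⟩
    exact (hname q hq hy).2.2
  obtain ⟨hSTne, hsol⟩ := mcomp_nonempty_and_forall_name (hTdom _ hFf) hgood
  exact ⟨⟨hpH₁, hH₁F⟩, hFX, hSTne, hsol⟩

theorem StrongWc.mcomp_of_transparent (hT' : StrongWc δA δB δX δY T' T)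
    (hS' : StrongWc δB δC δY δZ S' S) (htr : Transparent δX δY T) :
    StrongWc δA δC δX δZ (MComp S' T') (MComp S T) := by
  obtain ⟨K₁, H₁, hK₁, hH₁, h₁⟩ := strongWc_iff_exists_wcWitness.1 hT'
  obtain ⟨K₂, H₂, hK₂, hH₂, h₂⟩ := strongWc_iff_exists_wcWitness.1 hS'
  obtain ⟨f, ⟨F, hFc, hF⟩, htight⟩ :=
    htr _ ⟨_, hH₂.comp hK₁, (H₂.comp K₁).realizes_inducedMV⟩
  exact strongWc_iff_exists_wcWitness.2
    ⟨K₂, F.comp H₁, hK₂, hFc.comp hH₁, h₁.mcomp_of_tightens h₂ hF htight⟩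

end Transparency

/-- If `T :⊆ X ⇉ Y` and `S :⊆ Y ⇉ Z` are cylinders and `T` is transparent, then for all
`T' :⊆ A ⇉ B` and `S' :⊆ B ⇉ C` with `S' ≤_W^c S` and `T' ≤_W^c T` we have
`S' ∘ T' ≤_W^c S ∘ T`. -/
theorem comp_maximal {X Y Z : Type*}
    (δX : RepSpace X) (δY : RepSpace Y) (δZ : RepSpace Z)
    (T : X → Set Y) (S : Y → Set Z)
    (hT : IsCylinder δX δY T) (hS : IsCylinder δY δZ S)
    (htr : Transparent δX δY T)
    {A B C : Type*} (δA : RepSpace A) (δB : RepSpace B) (δC : RepSpace C)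
    (T' : A → Set B) (S' : B → Set C)
    (hS' : Wc δB δC δY δZ S' S) (hT' : Wc δA δB δX δY T' T) :
    Wc δA δC δX δZ (MComp S' T') (MComp S T) :=
  ((hT'.strongWc_of_isCylinder hT).mcomp_of_transparent
    (hS'.strongWc_of_isCylinder hS) htr).wc
end

section
/- Let T :⊆ X ⇉ Y and S :⊆ Y ⇉ Z be partial multivalued functions between represented spaces which are both cylinders and both transparent. Then S ∘ T is transparent. -/
open Filter Topology

/-! Composition of partial multivalued functions is associative and monotone in both
arguments with respect to tightening. So if `S ∘ e ⪯ g ∘ S` and `T ∘ f ⪯ e ∘ T`, then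
`(S ∘ T) ∘ f = S ∘ (T ∘ f) ⪯ S ∘ (e ∘ T) = (S ∘ e) ∘ T ⪯ (g ∘ S) ∘ T = g ∘ (S ∘ T)`. -/

section MComp

variable {X : Type u} {Y : Type v} {W : Type w} {Z : Type z}

theorem mcomp_nonempty_iff {f : Y → Set Z} {g : X → Set Y} {x : X} :
    (MComp f g x).Nonempty ↔ (g x).Nonempty ∧ ∀ y ∈ g x, (f y).Nonempty := by
  constructor
  · rintro ⟨z, hf, y, hy, -⟩
    exact ⟨⟨y, hy⟩, hf⟩
  · rintro ⟨⟨y, hy⟩, hf⟩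
    obtain ⟨z, hz⟩ := hf y hy
    exact ⟨z, hf, y, hy, hz⟩

/-- Both sides are empty at `x` as soon as some `y ∈ f x` has `T y = ∅`; otherwise the two
domain conditions agree. -/
theorem mcomp_assoc (S : W → Set Z) (T : Y → Set W) (f : X → Set Y) :
    MComp (MComp S T) f = MComp S (MComp T f) := by
  funext x
  ext z
  constructor
  · rintro ⟨hdom, y, hy, -, w, hw, hz⟩
    have hT : ∀ y ∈ f x, (T y).Nonempty := fun y hy => (mcomp_nonempty_iff.mp (hdom y hy)).1
    refine ⟨?_, w, ⟨hT, y, hy, hw⟩, hz⟩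
    rintro v ⟨-, y', hy', hv⟩
    exact (mcomp_nonempty_iff.mp (hdom y' hy')).2 v hv
  · rintro ⟨hS, w, ⟨hT, y, hy, hw⟩, hz⟩
    have hST : ∀ y ∈ f x, ∀ w ∈ T y, (S w).Nonempty := fun y hy w hw => hS w ⟨hT, y, hy, hw⟩
    exact ⟨fun y hy => mcomp_nonempty_iff.mpr ⟨hT y hy, hST y hy⟩, y, hy, hST y hy, w, hw, hz⟩

theorem Tightens.trans {f g h : X → Set Y} (hfg : Tightens f g) (hgh : Tightens g h) :
    Tightens f h := fun x hx =>
  let ⟨hg, hgx⟩ := hgh x hx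
  let ⟨hf, hfx⟩ := hfg x hg
  ⟨hf, hfx.trans hgx⟩

theorem Tightens.mcomp_left (S : Y → Set Z) {A B : X → Set Y} (h : Tightens A B) :
    Tightens (MComp S A) (MComp S B) := by
  intro x hx
  obtain ⟨hB, hSB⟩ := mcomp_nonempty_iff.mp hx
  obtain ⟨hA, hAB⟩ := h x hB
  refine ⟨mcomp_nonempty_iff.mpr ⟨hA, fun y hy => hSB y (hAB hy)⟩, ?_⟩
  rintro z ⟨-, y, hy, hz⟩
  exact ⟨hSB, y, hAB hy, hz⟩

theorem Tightens.mcomp_right {C D : Y → Set Z} (T : X → Set Y) (h : Tightens C D) :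
    Tightens (MComp C T) (MComp D T) := by
  intro x hx
  obtain ⟨hT, hDT⟩ := mcomp_nonempty_iff.mp hx
  refine ⟨mcomp_nonempty_iff.mpr ⟨hT, fun y hy => (h y (hDT y hy)).1⟩, ?_⟩
  rintro z ⟨-, y, hy, hz⟩
  exact ⟨hDT, y, hy, (h y (hDT y hy)).2 hz⟩

end MComp

theorem comp_transparent_general {X Y Z : Type*}
    (δX : RepSpace X) (δY : RepSpace Y) (δZ : RepSpace Z)
    (T : X → Set Y) (S : Y → Set Z)
    (htrT : Transparent δX δY T) (htrS : Transparent δY δZ S) :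
    Transparent δX δZ (MComp S T) := by
  intro g hg
  obtain ⟨e, he, hSe⟩ := htrS g hg
  obtain ⟨f, hf, hTf⟩ := htrT e he
  refine ⟨f, hf, ?_⟩
  rw [mcomp_assoc S T f, ← mcomp_assoc g S T]
  refine (hTf.mcomp_left S).trans ?_
  rw [← mcomp_assoc S e T]
  exact hSe.mcomp_right T

/-- If `T :⊆ X ⇉ Y` and `S :⊆ Y ⇉ Z` are cylinders which are both transparent, then
`S ∘ T` is transparent. -/
theorem comp_transparent {X Y Z : Type*}
    (δX : RepSpace X) (δY : RepSpace Y) (δZ : RepSpace Z)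
    (T : X → Set Y) (S : Y → Set Z)
    (hT : IsCylinder δX δY T) (hS : IsCylinder δY δZ S)
    (htrT : Transparent δX δY T) (htrS : Transparent δY δZ S) :
    Transparent δX δZ (MComp S T) :=
  comp_transparent_general δX δY δZ T S htrT htrS
end
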